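/- Let f ∈ L¹(ℝ^d), f ≥ 0, with f(x) ≍ g(|x|) for |x| ≥ A where g is decreasing and positive, and suppose f(tθ-y)/f(tθ) → e^{γ(θ·y)} for all y, ∫e^{γ(θ·y)}f(y)dy = h < ∞, and (f*f)(tθ)/f(tθ) → 2h. Then for every fixed r ≥ A, lim_{t→∞} (1/f(tθ)) ∫_{|tθ-y|>r, |y|>r} f(tθ-y)f(y) dy = 2 ∫_{|y|>r} e^{γ(θ·y)} f(y) dy. -/

import Mathlib

/-!
Split `∫ f (tθ - y) f y dy` over `{‖tθ - y‖ ≤ r}`, `{‖y‖ ≤ r}` and the rest. The substitution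
`y ↦ tθ - y` exchanges the two near pieces, which are disjoint once `t > 2r`, so the far piece is
the whole convolution minus twice the piece over `{‖y‖ ≤ r}`. On that ball the ratio
`f (tθ - y) / f (tθ)` is bounded uniformly: comparability with the decreasing profile `g` gives
`f (tθ - y) ≤ c² f ((t - r)θ)`, and `f ((t - r)θ) / f (tθ) → exp (γ r)`. Dominated convergence
turns the ball piece into `∫_{‖y‖ ≤ r} exp (γ ⟪θ, y⟫) f y = h - ∫_{‖y‖ > r} exp (γ ⟪θ, y⟫) f y`.
-/

open Filter MeasureTheory Measure
open scoped InnerProductSpace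

section Convolution

variable {E : Type*} [NormedAddCommGroup E] [MeasurableSpace E] [BorelSpace E]
  {μ : Measure E} [μ.IsAddLeftInvariant] [μ.IsNegInvariant]

theorem setIntegral_norm_sub_le_eq_norm_le (F : E → ℝ) (x : E) (r : ℝ) :
    ∫ y in {y | ‖x - y‖ ≤ r}, F (x - y) * F y ∂μ =
      ∫ y in {y | ‖y‖ ≤ r}, F (x - y) * F y ∂μ := by
  have := (measurePreserving_sub_left μ x).setIntegral_preimage_emb
    (measurableEmbedding_subLeft x) (fun y => F y * F (x - y)) {y | ‖y‖ ≤ r}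
  simp only [sub_sub_cancel, Set.preimage_ofPred_eq] at this
  rw [this]
  exact congrArg _ (funext fun y => mul_comm _ _)

theorem integrable_mul_comp_sub_of_abs_le_of_norm_ge {F : E → ℝ} (hF : Integrable F μ) {R M : ℝ}
    (hM : ∀ z, R ≤ ‖z‖ → |F z| ≤ M) {x : E} (hx : 2 * R ≤ ‖x‖) :
    Integrable (fun y => F (x - y) * F y) μ := by
  have hFx : Integrable (fun y => F (x - y)) μ := hF.comp_sub_left x
  refine ((hF.abs.add hFx.abs).const_mul M).mono' (hFx.aestronglyMeasurable.mul
    hF.aestronglyMeasurable) (Eventually.of_forall fun y => ?_)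
  have htri : ‖x‖ ≤ ‖x - y‖ + ‖y‖ := norm_le_norm_sub_add x y
  change |F (x - y) * F y| ≤ M * (|F y| + |F (x - y)|)
  rw [abs_mul]
  rcases le_total R ‖y‖ with hy | hy
  · have := hM y hy
    nlinarith [abs_nonneg (F y), abs_nonneg (F (x - y))]
  · have := hM (x - y) (by linarith)
    nlinarith [abs_nonneg (F y), abs_nonneg (F (x - y))]

theorem setIntegral_norm_gt_eq_integral_sub_two_mul {F : E → ℝ} {x : E} {r : ℝ} (hx : 2 * r < ‖x‖)
    (hF : Integrable (fun y => F (x - y) * F y) μ) :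
    ∫ y in {y | r < ‖x - y‖ ∧ r < ‖y‖}, F (x - y) * F y ∂μ =
      ∫ y, F (x - y) * F y ∂μ - 2 * ∫ y in {y | ‖y‖ ≤ r}, F (x - y) * F y ∂μ := by
  have hnear : MeasurableSet {y : E | ‖x - y‖ ≤ r} :=
    (isClosed_le (continuous_const.sub continuous_id).norm continuous_const).measurableSet
  have hball : MeasurableSet {y : E | ‖y‖ ≤ r} :=
    (isClosed_le continuous_norm continuous_const).measurableSet
  have hdisj : Disjoint {y : E | ‖x - y‖ ≤ r} {y | ‖y‖ ≤ r} :=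
    Set.disjoint_left.2 fun y h₁ h₂ => by
      have := norm_le_norm_sub_add x y
      simp only [Set.mem_ofPred_eq] at h₁ h₂
      linarith
  have hcompl : {y : E | r < ‖x - y‖ ∧ r < ‖y‖} = ({y | ‖x - y‖ ≤ r} ∪ {y | ‖y‖ ≤ r})ᶜ := by
    ext y
    simp only [Set.mem_ofPred_eq, Set.mem_compl_iff, Set.mem_union, not_or, not_le]
  rw [hcompl, setIntegral_compl (hnear.union hball) hF,
    setIntegral_union hdisj hball hF.integrableOn hF.integrableOn,
    setIntegral_norm_sub_le_eq_norm_le]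
  ring

theorem tendsto_setIntegral_div_of_dominated {ι : Type*} {l : Filter ι}
    [l.IsCountablyGenerated] {f φ : E → ℝ} {x : ι → E} {s : Set E} {B : ℝ}
    (hs : MeasurableSet s) (hf : Integrable f μ) (hf0 : ∀ y, 0 ≤ f y)
    (hpos : ∀ᶠ i in l, 0 < f (x i)) (hdom : ∀ᶠ i in l, ∀ y ∈ s, f (x i - y) ≤ B * f (x i))
    (hlim : ∀ y ∈ s, Tendsto (fun i => f (x i - y) / f (x i)) l (nhds (φ y))) :
    Tendsto (fun i => ∫ y in s, f (x i - y) * f y / f (x i) ∂μ) l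
      (nhds (∫ y in s, φ y * f y ∂μ)) := by
  refine tendsto_integral_filter_of_dominated_convergence (fun y => B * f y)
    (Eventually.of_forall fun i => ?_) ?_ (hf.const_mul B).restrict ?_
  · simp_rw [div_eq_mul_inv]
    exact (((hf.comp_sub_left (x i)).aestronglyMeasurable.mul hf.aestronglyMeasurable).mul_const
      _).restrict
  · filter_upwards [hpos, hdom] with i hi hdomi
    refine (ae_restrict_iff' hs).2 (Eventually.of_forall fun y hy => ?_)
    rw [Real.norm_of_nonneg (by have := hf0 (x i - y); have := hf0 y; positivity),
      div_le_iff₀ hi]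
    nlinarith [hdomi y hy, hf0 y]
  · refine (ae_restrict_iff' hs).2 (Eventually.of_forall fun y hy => ?_)
    simpa only [mul_div_right_comm] using (hlim y hy).mul_const (f y)

end Convolution

section RadialComparison

variable {E : Type*} {f : E → ℝ} {g : ℝ → ℝ} {A c : ℝ}

theorem pos_of_comparable [Norm E] (hc : 0 < c) (hgpos : ∀ r : ℝ, A ≤ r → 0 < g r)
    (hcomp : ∀ x : E, A ≤ ‖x‖ → (1 / c) * g ‖x‖ ≤ f x ∧ f x ≤ c * g ‖x‖)
    {x : E} (hx : A ≤ ‖x‖) : 0 < f x :=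
  lt_of_lt_of_le (by have := hgpos _ hx; positivity) (hcomp x hx).1

theorem abs_le_mul_of_comparable [Norm E] (hf0 : ∀ x, 0 ≤ f x) (hc : 0 < c)
    (hgdec : ∀ s t : ℝ, A ≤ s → s ≤ t → g t ≤ g s)
    (hcomp : ∀ x : E, A ≤ ‖x‖ → (1 / c) * g ‖x‖ ≤ f x ∧ f x ≤ c * g ‖x‖)
    {x : E} (hx : A ≤ ‖x‖) : |f x| ≤ c * g A := by
  rw [abs_of_nonneg (hf0 x)]
  exact (hcomp x hx).2.trans (by gcongr; exact hgdec _ _ le_rfl hx)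

theorem le_sq_mul_of_comparable [Norm E] (hc : 0 < c)
    (hgdec : ∀ s t : ℝ, A ≤ s → s ≤ t → g t ≤ g s)
    (hcomp : ∀ x : E, A ≤ ‖x‖ → (1 / c) * g ‖x‖ ≤ f x ∧ f x ≤ c * g ‖x‖)
    {w z : E} (hz : A ≤ ‖z‖) (hzw : ‖z‖ ≤ ‖w‖) : f w ≤ c ^ 2 * f z :=
  calc f w ≤ c * g ‖w‖ := (hcomp w (hz.trans hzw)).2
    _ ≤ c * g ‖z‖ := by gcongr; exact hgdec _ _ hz hzw
    _ = c ^ 2 * ((1 / c) * g ‖z‖) := by field_simp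
    _ ≤ c ^ 2 * f z := by gcongr; exact (hcomp z hz).1

theorem eventually_apply_smul_sub_le_of_comparable [NormedAddCommGroup E] [NormedSpace ℝ E]
    (hc : 0 < c) (hgdec : ∀ s t : ℝ, A ≤ s → s ≤ t → g t ≤ g s)
    (hcomp : ∀ x : E, A ≤ ‖x‖ → (1 / c) * g ‖x‖ ≤ f x ∧ f x ≤ c * g ‖x‖)
    {θ : E} (hθ : ‖θ‖ = 1) {r L : ℝ} (hpos : ∀ᶠ t : ℝ in atTop, 0 < f (t • θ))
    (hlim : Tendsto (fun t : ℝ => f (t • θ - r • θ) / f (t • θ)) atTop (nhds L)) :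
    ∀ᶠ t : ℝ in atTop, ∀ y : E, ‖y‖ ≤ r → f (t • θ - y) ≤ c ^ 2 * (L + 1) * f (t • θ) := by
  filter_upwards [hlim.eventually (eventually_lt_nhds (lt_add_one L)), hpos,
    eventually_ge_atTop (A + r), eventually_ge_atTop r] with t hratio ht htA htr y hy
  have hnorm : ‖t • θ - r • θ‖ = t - r := by
    rw [← sub_smul, norm_smul, hθ, mul_one, Real.norm_of_nonneg (by linarith)]
  have hfar : ‖t • θ - r • θ‖ ≤ ‖t • θ - y‖ := by
    have := norm_sub_norm_le (t • θ) y
    rw [norm_smul, hθ, mul_one, Real.norm_of_nonneg (by linarith [norm_nonneg y])] at this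
    linarith
  calc f (t • θ - y) ≤ c ^ 2 * f (t • θ - r • θ) :=
        le_sq_mul_of_comparable hc hgdec hcomp (by linarith) hfar
    _ ≤ c ^ 2 * ((L + 1) * f (t • θ)) := by gcongr; exact ((div_lt_iff₀ ht).1 hratio).le
    _ = c ^ 2 * (L + 1) * f (t • θ) := by ring

end RadialComparison

theorem stmt13_general (d : ℕ) (f : EuclideanSpace ℝ (Fin d) → ℝ)
    (hfint : Integrable f) (hf0 : ∀ x, 0 ≤ f x)
    (A c : ℝ) (hc : 1 ≤ c)
    (g : ℝ → ℝ) (hgpos : ∀ r : ℝ, A ≤ r → 0 < g r)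
    (hgdec : ∀ s t : ℝ, A ≤ s → s ≤ t → g t ≤ g s)
    (hcomp : ∀ x : EuclideanSpace ℝ (Fin d), A ≤ ‖x‖ →
      (1 / c) * g ‖x‖ ≤ f x ∧ f x ≤ c * g ‖x‖)
    (θ : EuclideanSpace ℝ (Fin d)) (hθ : ‖θ‖ = 1) (γ : ℝ)
    (h : ℝ)
    (hc1 : ∀ y : EuclideanSpace ℝ (Fin d),
      Tendsto (fun t : ℝ => f (t • θ - y) / f (t • θ)) atTop
        (nhds (Real.exp (γ * ⟪θ, y⟫_ℝ))))
    (hexp : Integrable (fun y => Real.exp (γ * ⟪θ, y⟫_ℝ) * f y))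
    (hh : (∫ y, Real.exp (γ * ⟪θ, y⟫_ℝ) * f y) = h)
    (hc2 : Tendsto (fun t : ℝ => (∫ y, f (t • θ - y) * f y) / f (t • θ)) atTop
      (nhds (2 * h))) :
    ∀ r : ℝ, A ≤ r →
      Tendsto (fun t : ℝ =>
          (∫ y in {y : EuclideanSpace ℝ (Fin d) | r < ‖t • θ - y‖ ∧ r < ‖y‖},
            f (t • θ - y) * f y) / f (t • θ)) atTop
        (nhds (2 * ∫ y in {y : EuclideanSpace ℝ (Fin d) | r < ‖y‖},
          Real.exp (γ * ⟪θ, y⟫_ℝ) * f y)) := by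
  intro r _
  have hc0 : 0 < c := by linarith
  have hnorm : ∀ t : ℝ, 0 ≤ t → ‖t • θ‖ = t := fun t ht => by
    rw [norm_smul, hθ, mul_one, Real.norm_of_nonneg ht]
  have hpos : ∀ᶠ t : ℝ in atTop, 0 < f (t • θ) := by
    filter_upwards [eventually_ge_atTop A, eventually_ge_atTop 0] with t htA ht0
    exact pos_of_comparable hc0 hgpos hcomp (by rwa [hnorm t ht0])
  have hdom := eventually_apply_smul_sub_le_of_comparable hc0 hgdec hcomp hθ hpos (r := r)
    (by simpa only [real_inner_smul_right, real_inner_self_eq_norm_sq, hθ, one_pow, mul_one]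
      using hc1 (r • θ))
  have hball := tendsto_setIntegral_div_of_dominated (μ := volume)
    (isClosed_le continuous_norm continuous_const).measurableSet hfint hf0 hpos hdom
    (fun y _ => hc1 y)
  have hinner : ∫ y in {y | ‖y‖ ≤ r}, Real.exp (γ * ⟪θ, y⟫_ℝ) * f y =
      h - ∫ y in {y | r < ‖y‖}, Real.exp (γ * ⟪θ, y⟫_ℝ) * f y := by
    rw [← hh, ← setIntegral_compl (measurableSet_lt measurable_const measurable_norm) hexp,
      Set.compl_ofPred]
    simp only [not_lt]
  have hsplit : ∀ᶠ t : ℝ in atTop, (∫ y, f (t • θ - y) * f y) / f (t • θ) -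
      2 * ∫ y in {y | ‖y‖ ≤ r}, f (t • θ - y) * f y / f (t • θ) =
      (∫ y in {y | r < ‖t • θ - y‖ ∧ r < ‖y‖}, f (t • θ - y) * f y) / f (t • θ) := by
    filter_upwards [eventually_ge_atTop (2 * A), eventually_gt_atTop (2 * r),
      eventually_ge_atTop 0] with t htA htr ht0
    have hint := integrable_mul_comp_sub_of_abs_le_of_norm_ge hfint
      (fun z => abs_le_mul_of_comparable hf0 hc0 hgdec hcomp) (by rwa [hnorm t ht0])
    rw [setIntegral_norm_gt_eq_integral_sub_two_mul (by rwa [hnorm t ht0]) hint, integral_div]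
    ring
  convert (hc2.sub (hball.const_mul 2)).congr' hsplit using 2
  rw [hinner]
  ring

theorem stmt13 (d : ℕ) (f : EuclideanSpace ℝ (Fin d) → ℝ)
    (hfint : Integrable f) (hf0 : ∀ x, 0 ≤ f x)
    (A c : ℝ) (hA : 1 ≤ A) (hc : 1 ≤ c)
    (g : ℝ → ℝ) (hgpos : ∀ r : ℝ, A ≤ r → 0 < g r)
    (hgdec : ∀ s t : ℝ, A ≤ s → s ≤ t → g t ≤ g s)
    (hcomp : ∀ x : EuclideanSpace ℝ (Fin d), A ≤ ‖x‖ →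
      (1 / c) * g ‖x‖ ≤ f x ∧ f x ≤ c * g ‖x‖)
    (θ : EuclideanSpace ℝ (Fin d)) (hθ : ‖θ‖ = 1) (γ : ℝ) (hγ : 0 ≤ γ)
    (h : ℝ)
    (hc1 : ∀ y : EuclideanSpace ℝ (Fin d),
      Tendsto (fun t : ℝ => f (t • θ - y) / f (t • θ)) atTop
        (nhds (Real.exp (γ * ⟪θ, y⟫_ℝ))))
    (hexp : Integrable (fun y => Real.exp (γ * ⟪θ, y⟫_ℝ) * f y))
    (hh : (∫ y, Real.exp (γ * ⟪θ, y⟫_ℝ) * f y) = h)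
    (hc2 : Tendsto (fun t : ℝ => (∫ y, f (t • θ - y) * f y) / f (t • θ)) atTop
      (nhds (2 * h))) :
    ∀ r : ℝ, A ≤ r →
      Tendsto (fun t : ℝ =>
          (∫ y in {y : EuclideanSpace ℝ (Fin d) | r < ‖t • θ - y‖ ∧ r < ‖y‖},
            f (t • θ - y) * f y) / f (t • θ)) atTop
        (nhds (2 * ∫ y in {y : EuclideanSpace ℝ (Fin d) | r < ‖y‖},
          Real.exp (γ * ⟪θ, y⟫_ℝ) * f y)) :=
  stmt13_general d f hfint hf0 A c hc g hgpos hgdec hcomp θ hθ γ h hc1 hexp hh hc2
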